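/- Let (E, ℰ, σ) be a σ-finite measure space. For i = 1, 2, let p_i be a strictly positive probability density with respect to σ, let q_i : E×E → (0,∞) be measurable with ∫_E q_i(x,y) σ(dy) = 1 for every x ∈ E, set P_i(dx) = p_i(x)σ(dx) and Q_i(x,dy) = q_i(x,y)σ(dy), and let K_i be the Metropolis–Hastings transition kernel with proposal Q_i and target P_i. Then ‖P_1⊗K_1 − P_2⊗K_2‖_TV ≤ 6·‖P_1⊗Q_1 − P_2⊗Q_2‖_TV. -/

import Mathlib

/-!
Let `F(x, y) = p(x) q(x, y)` be the density of `P ⊗ Q` with respect to `σ ⊗ σ`. Since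
`p(x) · min(1, F(y, x) / F(x, y)) · q(x, y) = min(F(x, y), F(y, x))`, the law `P ⊗ K` has density
`min(F(x, y), F(y, x))` off the diagonal plus the rejection mass
`r(x) = p(x) - ∫ min(F(x, y), F(y, x)) σ(dy)` on it. A total variation bound `t` between
`P₁ ⊗ Q₁` and `P₂ ⊗ Q₂` bounds both one-sided `L¹` distances `∫ (F₁ - F₂)⁺` and `∫ (F₂ - F₁)⁺`
by `t`. Then the acceptance densities are `2t`-close (once for `F`, once for `F ∘ swap`), the
targets, being marginals of `F`, are `t`-close, hence the rejection densities are `3t`-close, and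
the two laws differ by at most `5t ≤ 6t` on every set.
-/

open MeasureTheory ENNReal

noncomputable section

/-- The Metropolis–Hastings transition kernel (as a measure-valued map) with proposal
density `q` and target density `p`, with respect to a reference measure `σ`. -/
def mhKernel {E : Type} [MeasurableSpace E] (σ : Measure E) (p : E → ℝ) (q : E → E → ℝ)
    (x : E) : Measure E :=
  σ.withDensity (fun y => ENNReal.ofReal (min 1 ((p y * q y x) / (p x * q x y)) * q x y)) +
    (1 - ∫⁻ y, ENNReal.ofReal (min 1 ((p y * q y x) / (p x * q x y)) * q x y) ∂σ) •
      Measure.dirac x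

/-- The set function `S ↦ (P ⊗ K)(S)` on `E × E`, for an initial measure `P` and a
measure-valued kernel `K`. -/
def prodLaw {E : Type} [MeasurableSpace E] (P : Measure E) (K : E → Measure E)
    (S : Set (E × E)) : ℝ≥0∞ :=
  ∫⁻ x, K x (Prod.mk x ⁻¹' S) ∂P

section OneSidedDistance

variable {α : Type*} [MeasurableSpace α] {μ : Measure α} {f g : α → ℝ≥0∞}

lemma setLIntegral_le_add_lintegral_tsub (hg : Measurable g) (s : Set α) :
    ∫⁻ a in s, f a ∂μ ≤ ∫⁻ a in s, g a ∂μ + ∫⁻ a, (f a - g a) ∂μ :=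
  calc ∫⁻ a in s, f a ∂μ ≤ ∫⁻ a in s, (g a + (f a - g a)) ∂μ :=
        lintegral_mono fun _ => le_add_tsub
    _ = ∫⁻ a in s, g a ∂μ + ∫⁻ a in s, (f a - g a) ∂μ := lintegral_add_left hg _
    _ ≤ ∫⁻ a in s, g a ∂μ + ∫⁻ a, (f a - g a) ∂μ :=
        add_le_add le_rfl (setLIntegral_le_lintegral _ _)

lemma lintegral_tsub_le_of_forall_setLIntegral_le (hf : Measurable f) (hg : Measurable g)
    (hg_fin : ∫⁻ a, g a ∂μ ≠ ∞) {c : ℝ≥0∞}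
    (h : ∀ s, MeasurableSet s → ∫⁻ a in s, f a ∂μ ≤ ∫⁻ a in s, g a ∂μ + c) :
    ∫⁻ a, (f a - g a) ∂μ ≤ c := by
  set s := {a | g a < f a}
  have hs : MeasurableSet s := measurableSet_lt hg hf
  have hsplit : ∫⁻ a in s, f a ∂μ = ∫⁻ a in s, g a ∂μ + ∫⁻ a, (f a - g a) ∂μ := by
    have hsupp : Function.support (fun a => f a - g a) ⊆ s := fun a ha => by
      by_contra has
      exact ha (tsub_eq_zero_of_le (not_lt.1 has))
    rw [← setLIntegral_eq_of_support_subset hsupp, ← lintegral_add_left hg]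
    exact setLIntegral_congr_fun hs fun a ha => (add_tsub_cancel_of_le ha.le).symm
  refine ENNReal.le_of_add_le_add_left
    (ne_top_of_le_ne_top hg_fin (setLIntegral_le_lintegral s g)) ?_
  rw [← hsplit]
  exact h s hs

end OneSidedDistance

section Product

variable {α β : Type*} [MeasurableSpace α] [MeasurableSpace β] {μ : Measure α} {ν : Measure β}
  [SFinite ν]

lemma setLIntegral_prod_eq_lintegral_setLIntegral {F : α × β → ℝ≥0∞} (hF : Measurable F)
    {S : Set (α × β)} (hS : MeasurableSet S) :
    ∫⁻ z in S, F z ∂μ.prod ν = ∫⁻ x, ∫⁻ y in Prod.mk x ⁻¹' S, F (x, y) ∂ν ∂μ := by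
  rw [← lintegral_indicator hS, lintegral_prod _ (hF.indicator hS).aemeasurable]
  refine lintegral_congr fun x => ?_
  rw [← lintegral_indicator (measurable_prodMk_left hS)]
  rfl

lemma lintegral_tsub_le_lintegral_prod_tsub {f g : α → ℝ≥0∞} {F G : α × β → ℝ≥0∞}
    (hF : Measurable F) (hG : Measurable G)
    (hFf : ∀ x, ∫⁻ y, F (x, y) ∂ν = f x) (hGg : ∀ x, ∫⁻ y, G (x, y) ∂ν = g x) :
    ∫⁻ x, (f x - g x) ∂μ ≤ ∫⁻ z, (F z - G z) ∂μ.prod ν := by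
  rw [lintegral_prod (fun z => F z - G z) (hF.sub hG).aemeasurable]
  refine lintegral_mono fun x => ?_
  rw [← hFf, ← hGg]
  exact lintegral_sub_le _ _ (hG.comp measurable_prodMk_left)

lemma min_tsub_min_le_tsub_add_tsub {a b c d : ℝ≥0∞} : min a b - min c d ≤ (a - c) + (b - d) := by
  rcases min_cases c d with ⟨h, _⟩ | ⟨h, _⟩
  · rw [h]
    exact (tsub_le_tsub_right (min_le_left a b) c).trans le_self_add
  · rw [h]
    exact (tsub_le_tsub_right (min_le_right a b) d).trans le_add_self

lemma lintegral_min_swap_tsub_le [SFinite μ] {F G : α × α → ℝ≥0∞} (hF : Measurable F)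
    (hG : Measurable G) :
    ∫⁻ z, (min (F z) (F z.swap) - min (G z) (G z.swap)) ∂μ.prod μ ≤
      2 * ∫⁻ z, (F z - G z) ∂μ.prod μ :=
  calc _ ≤ ∫⁻ z, ((F z - G z) + (F z.swap - G z.swap)) ∂μ.prod μ :=
        lintegral_mono fun _ => min_tsub_min_le_tsub_add_tsub
    _ = ∫⁻ z, (F z - G z) ∂μ.prod μ + ∫⁻ z, (F z.swap - G z.swap) ∂μ.prod μ :=
        lintegral_add_left (hF.sub hG) _
    _ = 2 * ∫⁻ z, (F z - G z) ∂μ.prod μ := by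
        rw [lintegral_prod_swap (fun z => F z - G z), two_mul]

end Product

lemma tsub_tsub_tsub_le_tsub_add_tsub {a b c d : ℝ≥0∞} :
    (a - c) - (b - d) ≤ (a - b) + (d - c) := by
  rw [tsub_le_iff_right, tsub_le_iff_right]
  calc a ≤ (a - b) + b := le_tsub_add
    _ ≤ (a - b) + ((b - d) + d) := by gcongr; exact le_tsub_add
    _ ≤ (a - b) + ((b - d) + ((d - c) + c)) := by gcongr; exact le_tsub_add
    _ = (a - b) + (d - c) + (b - d) + c := by ring

lemma le_add_ofReal_of_abs_toReal_sub_le {a b : ℝ≥0∞} (ha : a ≠ ∞) (hb : b ≠ ∞) {t : ℝ}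
    (h : |a.toReal - b.toReal| ≤ t) : a ≤ b + ENNReal.ofReal t :=
  calc a = ENNReal.ofReal (b.toReal + (a.toReal - b.toReal)) := by
        rw [add_sub_cancel, ofReal_toReal ha]
    _ ≤ b + ENNReal.ofReal t := by
        refine ofReal_add_le.trans ?_
        rw [ofReal_toReal hb]
        gcongr
        exact (le_abs_self _).trans h

lemma abs_toReal_sub_le_of_le_add_ofReal {a b : ℝ≥0∞} (ha : a ≠ ∞) (hb : b ≠ ∞) {t : ℝ}
    (ht : 0 ≤ t) (hab : a ≤ b + ENNReal.ofReal t) (hba : b ≤ a + ENNReal.ofReal t) :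
    |a.toReal - b.toReal| ≤ t := by
  have hab' := toReal_le_add hab hb ofReal_ne_top
  have hba' := toReal_le_add hba ha ofReal_ne_top
  rw [toReal_ofReal ht] at hab' hba'
  exact abs_sub_le_iff.2 ⟨by linarith, by linarith⟩

lemma isProbabilityMeasure_withDensity {α : Type*} [MeasurableSpace α] {μ : Measure α}
    {f : α → ℝ≥0∞} (hf : ∫⁻ a, f a ∂μ = 1) : IsProbabilityMeasure (μ.withDensity f) :=
  ⟨by rw [withDensity_apply _ MeasurableSet.univ, Measure.restrict_univ, hf]⟩

lemma mul_min_one_div_mul {a b c : ℝ} (ha : 0 < a) (hb : 0 < b) :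
    a * (min 1 (c / (a * b)) * b) = min (a * b) c := by
  have hab : 0 < a * b := mul_pos ha hb
  rcases le_total c (a * b) with h | h
  · rw [min_eq_right ((div_le_one hab).2 h), min_eq_right h]
    field_simp
  · rw [min_eq_left ((one_le_div hab).2 h), min_eq_left h]
    ring

section ProdLaw

variable {E : Type} [MeasurableSpace E]

lemma prodLaw_ne_top {P : Measure E} [IsProbabilityMeasure P] {K : E → Measure E}
    (hK : ∀ x, IsProbabilityMeasure (K x)) (S : Set (E × E)) : prodLaw P K S ≠ ∞ :=
  ne_top_of_le_ne_top one_ne_top <|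
    calc prodLaw P K S ≤ ∫⁻ _, 1 ∂P := lintegral_mono fun _ => prob_le_one
      _ = 1 := by rw [lintegral_one, measure_univ]

lemma prodLaw_withDensity {μ ν : Measure E} [SFinite ν] {f : E → ℝ≥0∞} {g : E → E → ℝ≥0∞}
    (hf : Measurable f) (hf_fin : ∀ x, f x ≠ ∞) (hg : Measurable (Function.uncurry g))
    {S : Set (E × E)} (hS : MeasurableSet S) :
    prodLaw (μ.withDensity f) (fun x => ν.withDensity (g x)) S =
      ∫⁻ z in S, f z.1 * g z.1 z.2 ∂μ.prod ν := by
  rw [setLIntegral_prod_eq_lintegral_setLIntegral (F := fun z => f z.1 * g z.1 z.2)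
    ((hf.comp measurable_fst).mul hg) hS, prodLaw,
    lintegral_withDensity_eq_lintegral_mul_non_measurable _ hf
      (ae_of_all _ fun x => (hf_fin x).lt_top)]
  refine lintegral_congr fun x => ?_
  rw [Pi.mul_apply, withDensity_apply _ (measurable_prodMk_left hS)]
  exact (lintegral_const_mul _ (hg.comp measurable_prodMk_left)).symm

end ProdLaw

section MetropolisHastings

variable {E : Type} {p : E → ℝ} {q : E → E → ℝ}

def proposalDensity (p : E → ℝ) (q : E → E → ℝ) (z : E × E) : ℝ≥0∞ :=
  ENNReal.ofReal (p z.1 * q z.1 z.2)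

def acceptanceDensity (p : E → ℝ) (q : E → E → ℝ) (z : E × E) : ℝ≥0∞ :=
  min (proposalDensity p q z) (proposalDensity p q z.swap)

lemma ofReal_mul_mhAcceptance (hp : ∀ x, 0 < p x) (hq : ∀ x y, 0 < q x y) (x y : E) :
    ENNReal.ofReal (p x) * ENNReal.ofReal (min 1 (p y * q y x / (p x * q x y)) * q x y) =
      acceptanceDensity p q (x, y) := by
  rw [← ofReal_mul (hp x).le, mul_min_one_div_mul (hp x) (hq x y), ofReal_min]
  rfl

variable [MeasurableSpace E] {σ : Measure E}

def rejectionDensity (σ : Measure E) (p : E → ℝ) (q : E → E → ℝ) (x : E) : ℝ≥0∞ :=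
  ENNReal.ofReal (p x) - ∫⁻ y, acceptanceDensity p q (x, y) ∂σ

lemma measurable_proposalDensity (hpm : Measurable p) (hqm : Measurable (Function.uncurry q)) :
    Measurable (proposalDensity p q) :=
  ((hpm.comp measurable_fst).mul hqm).ennreal_ofReal

lemma measurable_acceptanceDensity (hpm : Measurable p)
    (hqm : Measurable (Function.uncurry q)) : Measurable (acceptanceDensity p q) :=
  have h := measurable_proposalDensity hpm hqm
  h.min (h.comp measurable_swap)

lemma measurable_rejectionDensity [SFinite σ] (hpm : Measurable p)
    (hqm : Measurable (Function.uncurry q)) : Measurable (rejectionDensity σ p q) :=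
  hpm.ennreal_ofReal.sub (measurable_acceptanceDensity hpm hqm).lintegral_prod_right'

lemma prodLaw_eq_setLIntegral_proposalDensity [SFinite σ] (hpm : Measurable p)
    (hqm : Measurable (Function.uncurry q)) (hp : ∀ x, 0 ≤ p x) {S : Set (E × E)}
    (hS : MeasurableSet S) :
    prodLaw (σ.withDensity fun x => ENNReal.ofReal (p x))
        (fun x => σ.withDensity fun y => ENNReal.ofReal (q x y)) S =
      ∫⁻ z in S, proposalDensity p q z ∂σ.prod σ := by
  rw [prodLaw_withDensity (g := fun x y => ENNReal.ofReal (q x y)) hpm.ennreal_ofReal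
    (fun _ => ofReal_ne_top) hqm.ennreal_ofReal hS]
  exact lintegral_congr fun z => (ofReal_mul (hp z.1)).symm

lemma lintegral_proposalDensity_right {x : E} (hp : 0 ≤ p x)
    (hqi : ∫⁻ y, ENNReal.ofReal (q x y) ∂σ = 1) :
    ∫⁻ y, proposalDensity p q (x, y) ∂σ = ENNReal.ofReal (p x) :=
  calc ∫⁻ y, proposalDensity p q (x, y) ∂σ
      = ∫⁻ y, ENNReal.ofReal (p x) * ENNReal.ofReal (q x y) ∂σ :=
        lintegral_congr fun _ => ofReal_mul hp
    _ = ENNReal.ofReal (p x) := by rw [lintegral_const_mul' _ _ ofReal_ne_top, hqi, mul_one]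

lemma isProbabilityMeasure_mhKernel (hq : ∀ x y, 0 ≤ q x y)
    (hqi : ∀ x, ∫⁻ y, ENNReal.ofReal (q x y) ∂σ = 1) (x : E) :
    IsProbabilityMeasure (mhKernel σ p q x) := by
  constructor
  have hle : ∫⁻ y, ENNReal.ofReal (min 1 (p y * q y x / (p x * q x y)) * q x y) ∂σ ≤ 1 :=
    hqi x ▸ lintegral_mono fun y =>
      ofReal_le_ofReal (mul_le_of_le_one_left (hq x y) (min_le_left _ _))
  rw [mhKernel, Measure.add_apply, Measure.smul_apply, withDensity_apply _ MeasurableSet.univ,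
    Measure.restrict_univ, measure_univ, smul_eq_mul, mul_one, add_tsub_cancel_of_le hle]

lemma ofReal_mul_mhKernel_apply (hp : ∀ x, 0 < p x) (hq : ∀ x y, 0 < q x y) (x : E)
    {B : Set E} (hB : MeasurableSet B) :
    ENNReal.ofReal (p x) * mhKernel σ p q x B =
      ∫⁻ y in B, acceptanceDensity p q (x, y) ∂σ + B.indicator (rejectionDensity σ p q) x := by
  have hacc : ∀ ν : Measure E, ENNReal.ofReal (p x) *
      ∫⁻ y, ENNReal.ofReal (min 1 (p y * q y x / (p x * q x y)) * q x y) ∂ν =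
      ∫⁻ y, acceptanceDensity p q (x, y) ∂ν := fun ν => by
    rw [← lintegral_const_mul' _ _ ofReal_ne_top]
    exact lintegral_congr (ofReal_mul_mhAcceptance hp hq x)
  rw [mhKernel, Measure.add_apply, Measure.smul_apply, smul_eq_mul, Measure.dirac_apply' x hB,
    withDensity_apply _ hB, mul_add, hacc, ← mul_assoc,
    ENNReal.mul_sub fun _ _ => ofReal_ne_top, mul_one, hacc]
  by_cases hx : x ∈ B <;> simp [hx, rejectionDensity]

lemma prodLaw_mhKernel [SFinite σ] (hpm : Measurable p) (hqm : Measurable (Function.uncurry q))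
    (hp : ∀ x, 0 < p x) (hq : ∀ x y, 0 < q x y) {S : Set (E × E)} (hS : MeasurableSet S) :
    prodLaw (σ.withDensity fun x => ENNReal.ofReal (p x)) (mhKernel σ p q) S =
      ∫⁻ z in S, acceptanceDensity p q z ∂σ.prod σ +
        ∫⁻ x in {x | (x, x) ∈ S}, rejectionDensity σ p q x ∂σ := by
  have hD : MeasurableSet {x | (x, x) ∈ S} := measurable_id.prodMk measurable_id hS
  rw [prodLaw, lintegral_withDensity_eq_lintegral_mul_non_measurable _ hpm.ennreal_ofReal
      (ae_of_all _ fun _ => ofReal_lt_top),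
    setLIntegral_prod_eq_lintegral_setLIntegral (measurable_acceptanceDensity hpm hqm) hS,
    ← lintegral_indicator hD,
    ← lintegral_add_right _ ((measurable_rejectionDensity hpm hqm).indicator hD)]
  exact lintegral_congr fun x => ofReal_mul_mhKernel_apply hp hq x (measurable_prodMk_left hS)

end MetropolisHastings

section Comparison

variable {E : Type} [MeasurableSpace E] {σ : Measure E} [SFinite σ] {p₁ p₂ : E → ℝ}
  {q₁ q₂ : E → E → ℝ}

lemma lintegral_rejectionDensity_tsub_le (hp₁m : Measurable p₁) (hp₂m : Measurable p₂)
    (hq₁m : Measurable (Function.uncurry q₁)) (hq₂m : Measurable (Function.uncurry q₂)) :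
    ∫⁻ x, (rejectionDensity σ p₁ q₁ x - rejectionDensity σ p₂ q₂ x) ∂σ ≤
      ∫⁻ x, (ENNReal.ofReal (p₁ x) - ENNReal.ofReal (p₂ x)) ∂σ +
        ∫⁻ z, (acceptanceDensity p₂ q₂ z - acceptanceDensity p₁ q₁ z) ∂σ.prod σ :=
  calc _ ≤ ∫⁻ x, ((ENNReal.ofReal (p₁ x) - ENNReal.ofReal (p₂ x)) +
          (∫⁻ y, acceptanceDensity p₂ q₂ (x, y) ∂σ - ∫⁻ y, acceptanceDensity p₁ q₁ (x, y) ∂σ)) ∂σ :=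
        lintegral_mono fun _ => tsub_tsub_tsub_le_tsub_add_tsub
    _ = ∫⁻ x, (ENNReal.ofReal (p₁ x) - ENNReal.ofReal (p₂ x)) ∂σ +
          ∫⁻ x, (∫⁻ y, acceptanceDensity p₂ q₂ (x, y) ∂σ -
            ∫⁻ y, acceptanceDensity p₁ q₁ (x, y) ∂σ) ∂σ :=
        lintegral_add_left (hp₁m.ennreal_ofReal.sub hp₂m.ennreal_ofReal) _
    _ ≤ _ := add_le_add le_rfl <| lintegral_tsub_le_lintegral_prod_tsub
        (measurable_acceptanceDensity hp₂m hq₂m) (measurable_acceptanceDensity hp₁m hq₁m)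
        (fun _ => rfl) (fun _ => rfl)

lemma prodLaw_mhKernel_le_add (hp₁m : Measurable p₁) (hp₂m : Measurable p₂)
    (hp₁ : ∀ x, 0 < p₁ x) (hp₂ : ∀ x, 0 < p₂ x)
    (hq₁m : Measurable (Function.uncurry q₁)) (hq₂m : Measurable (Function.uncurry q₂))
    (hq₁ : ∀ x y, 0 < q₁ x y) (hq₂ : ∀ x y, 0 < q₂ x y)
    (hq₁i : ∀ x, ∫⁻ y, ENNReal.ofReal (q₁ x y) ∂σ = 1)
    (hq₂i : ∀ x, ∫⁻ y, ENNReal.ofReal (q₂ x y) ∂σ = 1) {c : ℝ≥0∞}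
    (h₁₂ : ∫⁻ z, (proposalDensity p₁ q₁ z - proposalDensity p₂ q₂ z) ∂σ.prod σ ≤ c)
    (h₂₁ : ∫⁻ z, (proposalDensity p₂ q₂ z - proposalDensity p₁ q₁ z) ∂σ.prod σ ≤ c)
    {S : Set (E × E)} (hS : MeasurableSet S) :
    prodLaw (σ.withDensity fun x => ENNReal.ofReal (p₁ x)) (mhKernel σ p₁ q₁) S ≤
      prodLaw (σ.withDensity fun x => ENNReal.ofReal (p₂ x)) (mhKernel σ p₂ q₂) S + 5 * c := by
  have hF₁ := measurable_proposalDensity hp₁m hq₁m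
  have hF₂ := measurable_proposalDensity hp₂m hq₂m
  have hacc₁₂ : ∫⁻ z, (acceptanceDensity p₁ q₁ z - acceptanceDensity p₂ q₂ z) ∂σ.prod σ ≤ 2 * c :=
    (lintegral_min_swap_tsub_le hF₁ hF₂).trans (by gcongr)
  have hacc₂₁ : ∫⁻ z, (acceptanceDensity p₂ q₂ z - acceptanceDensity p₁ q₁ z) ∂σ.prod σ ≤ 2 * c :=
    (lintegral_min_swap_tsub_le hF₂ hF₁).trans (by gcongr)
  have htarget : ∫⁻ x, (ENNReal.ofReal (p₁ x) - ENNReal.ofReal (p₂ x)) ∂σ ≤ c :=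
    (lintegral_tsub_le_lintegral_prod_tsub hF₁ hF₂
      (fun x => lintegral_proposalDensity_right (hp₁ x).le (hq₁i x))
      (fun x => lintegral_proposalDensity_right (hp₂ x).le (hq₂i x))).trans h₁₂
  have hrej : ∫⁻ x, (rejectionDensity σ p₁ q₁ x - rejectionDensity σ p₂ q₂ x) ∂σ ≤ 3 * c :=
    calc _ ≤ c + 2 * c :=
          (lintegral_rejectionDensity_tsub_le hp₁m hp₂m hq₁m hq₂m).trans (add_le_add htarget hacc₂₁)
      _ = 3 * c := by ring
  rw [prodLaw_mhKernel hp₁m hq₁m hp₁ hq₁ hS, prodLaw_mhKernel hp₂m hq₂m hp₂ hq₂ hS]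
  calc _ ≤ (∫⁻ z in S, acceptanceDensity p₂ q₂ z ∂σ.prod σ + 2 * c) +
        (∫⁻ x in {x | (x, x) ∈ S}, rejectionDensity σ p₂ q₂ x ∂σ + 3 * c) :=
        add_le_add
          ((setLIntegral_le_add_lintegral_tsub (measurable_acceptanceDensity hp₂m hq₂m) _).trans
            (add_le_add le_rfl hacc₁₂))
          ((setLIntegral_le_add_lintegral_tsub (measurable_rejectionDensity hp₂m hq₂m) _).trans
            (add_le_add le_rfl hrej))
    _ = _ := by ring

lemma lintegral_proposalDensity_tsub_le (hp₁m : Measurable p₁) (hp₂m : Measurable p₂)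
    (hp₁ : ∀ x, 0 ≤ p₁ x) (hp₂ : ∀ x, 0 ≤ p₂ x)
    (hp₁i : ∫⁻ x, ENNReal.ofReal (p₁ x) ∂σ = 1) (hp₂i : ∫⁻ x, ENNReal.ofReal (p₂ x) ∂σ = 1)
    (hq₁m : Measurable (Function.uncurry q₁)) (hq₂m : Measurable (Function.uncurry q₂))
    (hq₁i : ∀ x, ∫⁻ y, ENNReal.ofReal (q₁ x y) ∂σ = 1)
    (hq₂i : ∀ x, ∫⁻ y, ENNReal.ofReal (q₂ x y) ∂σ = 1) {t : ℝ}
    (h : ∀ S : Set (E × E), MeasurableSet S →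
      |(prodLaw (σ.withDensity fun x => ENNReal.ofReal (p₁ x))
          (fun x => σ.withDensity fun y => ENNReal.ofReal (q₁ x y)) S).toReal -
        (prodLaw (σ.withDensity fun x => ENNReal.ofReal (p₂ x))
          (fun x => σ.withDensity fun y => ENNReal.ofReal (q₂ x y)) S).toReal| ≤ t) :
    ∫⁻ z, (proposalDensity p₁ q₁ z - proposalDensity p₂ q₂ z) ∂σ.prod σ ≤ ENNReal.ofReal t := by
  have := isProbabilityMeasure_withDensity hp₁i
  have := isProbabilityMeasure_withDensity hp₂i
  have hQ₁ := fun x => isProbabilityMeasure_withDensity (hq₁i x)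
  have hQ₂ := fun x => isProbabilityMeasure_withDensity (hq₂i x)
  have hF₂_fin : ∫⁻ z, proposalDensity p₂ q₂ z ∂σ.prod σ ≠ ∞ := by
    rw [← setLIntegral_univ, ← prodLaw_eq_setLIntegral_proposalDensity hp₂m hq₂m hp₂ .univ]
    exact prodLaw_ne_top hQ₂ _
  refine lintegral_tsub_le_of_forall_setLIntegral_le (measurable_proposalDensity hp₁m hq₁m)
    (measurable_proposalDensity hp₂m hq₂m) hF₂_fin fun S hS => ?_
  rw [← prodLaw_eq_setLIntegral_proposalDensity hp₁m hq₁m hp₁ hS,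
    ← prodLaw_eq_setLIntegral_proposalDensity hp₂m hq₂m hp₂ hS]
  exact le_add_ofReal_of_abs_toReal_sub_le (prodLaw_ne_top hQ₁ _) (prodLaw_ne_top hQ₂ _) (h S hS)

end Comparison

/-- Total variation bound for Metropolis–Hastings chains:
`‖P₁ ⊗ K₁ − P₂ ⊗ K₂‖_TV ≤ 6 ‖P₁ ⊗ Q₁ − P₂ ⊗ Q₂‖_TV`, stated as: any uniform bound `t`
on the proposal side yields the bound `6t` on the Metropolis–Hastings side. -/
theorem mh_totalVariation_bound {E : Type} [MeasurableSpace E] (σ : Measure E) [SigmaFinite σ]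
    (p₁ p₂ : E → ℝ) (q₁ q₂ : E → E → ℝ)
    (hp₁m : Measurable p₁) (hp₂m : Measurable p₂)
    (hp₁ : ∀ x, 0 < p₁ x) (hp₂ : ∀ x, 0 < p₂ x)
    (hp₁i : ∫⁻ x, ENNReal.ofReal (p₁ x) ∂σ = 1) (hp₂i : ∫⁻ x, ENNReal.ofReal (p₂ x) ∂σ = 1)
    (hq₁m : Measurable (Function.uncurry q₁)) (hq₂m : Measurable (Function.uncurry q₂))
    (hq₁ : ∀ x y, 0 < q₁ x y) (hq₂ : ∀ x y, 0 < q₂ x y)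
    (hq₁i : ∀ x, ∫⁻ y, ENNReal.ofReal (q₁ x y) ∂σ = 1)
    (hq₂i : ∀ x, ∫⁻ y, ENNReal.ofReal (q₂ x y) ∂σ = 1)
    (t : ℝ)
    (hprop : ∀ S : Set (E × E), MeasurableSet S →
      |(prodLaw (σ.withDensity fun x => ENNReal.ofReal (p₁ x))
          (fun x => σ.withDensity fun y => ENNReal.ofReal (q₁ x y)) S).toReal -
        (prodLaw (σ.withDensity fun x => ENNReal.ofReal (p₂ x))
          (fun x => σ.withDensity fun y => ENNReal.ofReal (q₂ x y)) S).toReal| ≤ t) :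
    ∀ S : Set (E × E), MeasurableSet S →
      |(prodLaw (σ.withDensity fun x => ENNReal.ofReal (p₁ x)) (mhKernel σ p₁ q₁) S).toReal -
        (prodLaw (σ.withDensity fun x => ENNReal.ofReal (p₂ x)) (mhKernel σ p₂ q₂) S).toReal| ≤
      6 * t := by
  intro S hS
  have ht : 0 ≤ t := by simpa [prodLaw] using hprop ∅ .empty
  have h₁₂ := lintegral_proposalDensity_tsub_le hp₁m hp₂m (fun x => (hp₁ x).le)
    (fun x => (hp₂ x).le) hp₁i hp₂i hq₁m hq₂m hq₁i hq₂i hprop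
  have h₂₁ := lintegral_proposalDensity_tsub_le hp₂m hp₁m (fun x => (hp₂ x).le)
    (fun x => (hp₁ x).le) hp₂i hp₁i hq₂m hq₁m hq₂i hq₁i fun S hS => by
      rw [abs_sub_comm]
      exact hprop S hS
  have h56 : 5 * ENNReal.ofReal t ≤ ENNReal.ofReal (6 * t) := by
    rw [← ofReal_ofNat 5, ← ofReal_mul (by norm_num)]
    exact ofReal_le_ofReal (by linarith)
  have := isProbabilityMeasure_withDensity hp₁i
  have := isProbabilityMeasure_withDensity hp₂i
  refine abs_toReal_sub_le_of_le_add_ofReal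
    (prodLaw_ne_top (isProbabilityMeasure_mhKernel (fun x y => (hq₁ x y).le) hq₁i) S)
    (prodLaw_ne_top (isProbabilityMeasure_mhKernel (fun x y => (hq₂ x y).le) hq₂i) S)
    (by linarith) ?_ ?_
  · exact (prodLaw_mhKernel_le_add hp₁m hp₂m hp₁ hp₂ hq₁m hq₂m hq₁ hq₂ hq₁i hq₂i h₁₂ h₂₁ hS).trans
      (add_le_add le_rfl h56)
  · exact (prodLaw_mhKernel_le_add hp₂m hp₁m hp₂ hp₁ hq₂m hq₁m hq₂ hq₁ hq₂i hq₁i h₂₁ h₁₂ hS).trans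
      (add_le_add le_rfl h56)
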